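/- arXiv:hep-th/0605169 — 2 statements merged into one kernel-verified Lean document; each statement's English description precedes it below -/
import Mathlib

section
/- Let p : ℝ → ℂ be differentiable with p nowhere zero, and let ψ : ℝ → ℂ be a nonvanishing twice differentiable solution of ψ'' = −p² ψ such that ψ' + i p ψ is nowhere zero. Define I = −(ψ'/ψ − i p)/(ψ'/ψ + i p). Then I satisfies the Riccati-type equation I' = (p'/(2p))(1 − I²) − 2 i p I. -/
open Complex

theorem stmt_5 (p p' ψ ψ' ψ'' : ℝ → ℂ)
    (hp : ∀ x, HasDerivAt p (p' x) x) (hp0 : ∀ x, p x ≠ 0)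
    (hψ : ∀ x, HasDerivAt ψ (ψ' x) x) (hψ' : ∀ x, HasDerivAt ψ' (ψ'' x) x)
    (hψ0 : ∀ x, ψ x ≠ 0)
    (hSch : ∀ x, ψ'' x = -(p x) ^ 2 * ψ x)
    (hden : ∀ x, ψ' x + Complex.I * p x * ψ x ≠ 0)
    (I : ℝ → ℂ)
    (hI : ∀ x, I x = -((ψ' x / ψ x - Complex.I * p x) /
      (ψ' x / ψ x + Complex.I * p x))) :
    ∀ x, HasDerivAt I
      (p' x / (2 * p x) * (1 - (I x) ^ 2) - 2 * Complex.I * p x * I x) x := by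
  have hIeq : I = fun y => -((ψ' y - Complex.I * p y * ψ y) /
      (ψ' y + Complex.I * p y * ψ y)) := by
    funext y
    rw [hI y]
    have h1 := hψ0 y
    have h2 := hden y
    have h3 : ψ' y / ψ y + Complex.I * p y ≠ 0 := by
      intro h
      apply h2
      field_simp at h
      linear_combination h
    field_simp
  intro x
  have hpx := hp0 x
  have hDx := hden x
  have hψx := hψ0 x
  have hmul : HasDerivAt (fun y => Complex.I * p y * ψ y)
      (Complex.I * (p' x * ψ x + p x * ψ' x)) x := by
    have := ((hp x).mul (hψ x)).const_mul Complex.I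
    simpa [mul_assoc] using this
  have hN : HasDerivAt (fun y => ψ' y - Complex.I * p y * ψ y)
      (ψ'' x - Complex.I * (p' x * ψ x + p x * ψ' x)) x := (hψ' x).sub hmul
  have hD : HasDerivAt (fun y => ψ' y + Complex.I * p y * ψ y)
      (ψ'' x + Complex.I * (p' x * ψ x + p x * ψ' x)) x := (hψ' x).add hmul
  have hder : HasDerivAt (fun y => -((ψ' y - Complex.I * p y * ψ y) /
      (ψ' y + Complex.I * p y * ψ y))) _ x := (hN.div hD hDx).neg
  rw [hIeq]
  convert hder using 1
  simp only [hSch x]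
  have hI2 : Complex.I ^ 2 = -1 := Complex.I_sq
  field_simp [show ψ' x + p x * Complex.I * ψ x ≠ 0 by convert hDx using 2; ring]
  ring_nf
  simp only [Complex.I_sq, show Complex.I ^ 3 = -Complex.I by
      rw [pow_succ, Complex.I_sq]; ring,
    show Complex.I ^ 4 = 1 by rw [show (4:ℕ) = 2*2 from rfl, pow_mul, Complex.I_sq]; ring,
    show Complex.I ^ 5 = Complex.I by
      rw [pow_succ, show (4:ℕ) = 2*2 from rfl, pow_mul, Complex.I_sq]; ring,
    show Complex.I ^ 6 = -1 by
      rw [show (6:ℕ) = 2*3 from rfl, pow_mul, Complex.I_sq]; ring]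
  ring
end

section
/- Logarithmic-derivative constancy (key step for Green's function): let p : I → ℂ be differentiable and nonvanishing on an interval I, ψ : I → ℂ twice differentiable with ψ'' = −p²ψ and ψ' + ipψ nonvanishing, and J : I → ℂ differentiable and nonvanishing satisfying J' = −ip J − (p'/(2p)) J I, where I(x) = −(ψ'/ψ − ip)/(ψ'/ψ + ip) (ψ nonvanishing). Then the function A(x) = J(x)(ψ'(x) + i p(x) ψ(x)) / √(p(x)) is constant on I (for any continuous branch of the square root along which p does not cross the branch cut). -/
/-!
Write `N = ψ' + i p ψ`. The Schrödinger equation gives `N' = i p N + i p' ψ`, and since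
`N · I_R = 2 i p ψ - N`, the equation for `J` makes the `i p` and `ψ` terms cancel in
`(J N)' = J' N + J N'`, leaving `(J N)' = (p' / 2p) · J N`. As `p = s²`, also
`s' / s = p' / 2p`, so `J N` and `s` have the same logarithmic derivative and `J N / s` is
constant on the convex set `S`.
-/

open Complex

theorem Convex.interior_nonempty_of_ne {S : Set ℝ} (hS : Convex ℝ S) {x y : ℝ} (hx : x ∈ S)
    (hy : y ∈ S) (hxy : x ≠ y) : (interior S).Nonempty := by
  refine (Set.nonempty_Ioo.2 (min_lt_max.2 hxy)).mono ?_
  rw [← interior_Icc]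
  exact interior_mono (hS.ordConnected.uIcc_subset hx hy)

theorem Convex.eq_of_hasDerivWithinAt_zero {E : Type*} [NormedAddCommGroup E] [NormedSpace ℝ E]
    {S : Set ℝ} (hS : Convex ℝ S) {f : ℝ → E}
    (hf : ∀ x ∈ S, HasDerivWithinAt f 0 S x) {x y : ℝ} (hx : x ∈ S) (hy : y ∈ S) :
    f x = f y := by
  have h := hS.norm_image_sub_le_of_norm_hasDerivWithin_le hf (C := 0) (by simp) hy hx
  simpa [sub_eq_zero] using h

section

variable {S : Set ℝ} {x : ℝ}

theorem UniqueDiffWithinAt.eq_two_mul_mul_of_sq_eq {p s : ℝ → ℂ} {p' s' : ℂ}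
    (hU : UniqueDiffWithinAt ℝ S x) (hx : x ∈ S) (hp : HasDerivWithinAt p p' S x)
    (hs : HasDerivWithinAt s s' S x) (hsq : ∀ w ∈ S, s w ^ 2 = p w) :
    p' = 2 * s x * s' := by
  have hp₂ : HasDerivWithinAt p (2 * s x * s') S x := by
    simpa using (hs.pow 2).congr_of_mem (fun w hw => (hsq w hw).symm) hx
  exact hU.eq_deriv S hp hp₂

theorem HasDerivWithinAt.add_I_mul_mul_of_schrodinger {p ψ ψ' : ℝ → ℂ} {p' ψ'' : ℂ}
    (hp : HasDerivWithinAt p p' S x) (hψ : HasDerivWithinAt ψ (ψ' x) S x)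
    (hψ' : HasDerivWithinAt ψ' ψ'' S x) (hSch : ψ'' = -p x ^ 2 * ψ x) :
    HasDerivWithinAt (fun w => ψ' w + I * p w * ψ w)
      (I * p x * (ψ' x + I * p x * ψ x) + I * p' * ψ x) S x := by
  refine (hψ'.fun_add ((hp.const_mul I).fun_mul hψ)).congr_deriv ?_
  rw [hSch]
  ring_nf
  rw [I_sq]
  ring

theorem logDeriv_transport_identity {p p' ψ ψ' J : ℂ} (hp : p ≠ 0)
    (hN : ψ' + I * p * ψ ≠ 0) :
    (-I * p * J - p' / (2 * p) * J * -((ψ' - I * p * ψ) / (ψ' + I * p * ψ))) *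
        (ψ' + I * p * ψ) + J * (I * p * (ψ' + I * p * ψ) + I * p' * ψ) =
      p' / (2 * p) * J * (ψ' + I * p * ψ) := by
  field_simp
  ring

theorem HasDerivWithinAt.div_eq_zero_of_logDeriv_eq {f s p : ℝ → ℂ} {p' s' : ℂ}
    (hf : HasDerivWithinAt f (p' / (2 * p x) * f x) S x) (hs : HasDerivWithinAt s s' S x)
    (hs0 : s x ≠ 0) (hsq : s x ^ 2 = p x) (hp' : p' = 2 * s x * s') :
    HasDerivWithinAt (fun w => f w / s w) 0 S x := by
  refine (hf.div hs hs0).congr_deriv ?_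
  rw [hp', ← hsq]
  field_simp
  ring

end

theorem stmt_17_general (S : Set ℝ) (hS : Convex ℝ S)
    (p p' s s' ψ ψ' ψ'' J J' : ℝ → ℂ)
    (hp : ∀ x ∈ S, HasDerivWithinAt p (p' x) S x)
    (hs : ∀ x ∈ S, HasDerivWithinAt s (s' x) S x)
    (hsq : ∀ x ∈ S, (s x) ^ 2 = p x) (hs0 : ∀ x ∈ S, s x ≠ 0)
    (hψ : ∀ x ∈ S, HasDerivWithinAt ψ (ψ' x) S x)
    (hψ' : ∀ x ∈ S, HasDerivWithinAt ψ' (ψ'' x) S x)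
    (hSch : ∀ x ∈ S, ψ'' x = -(p x) ^ 2 * ψ x)
    (hden : ∀ x ∈ S, ψ' x + Complex.I * p x * ψ x ≠ 0)
    (IR : ℝ → ℂ)
    (hIR : ∀ x ∈ S, IR x = -((ψ' x - Complex.I * p x * ψ x) /
      (ψ' x + Complex.I * p x * ψ x)))
    (hJ : ∀ x ∈ S, HasDerivWithinAt J (J' x) S x)
    (hJeq : ∀ x ∈ S, J' x = -Complex.I * p x * J x
      - (p' x / (2 * p x)) * J x * IR x)
    (A : ℝ → ℂ)
    (hA : ∀ x ∈ S, A x = J x * (ψ' x + Complex.I * p x * ψ x) / s x) :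
    ∀ x ∈ S, ∀ y ∈ S, A x = A y := by
  intro x hx y hy
  rcases eq_or_ne x y with rfl | hxy
  · rfl
  have hU : UniqueDiffOn ℝ S := uniqueDiffOn_convex hS (hS.interior_nonempty_of_ne hx hy hxy)
  refine hS.eq_of_hasDerivWithinAt_zero (fun z hz => ?_) hx hy
  have hp0 : p z ≠ 0 := hsq z hz ▸ pow_ne_zero 2 (hs0 z hz)
  have hJN : HasDerivWithinAt (fun w => J w * (ψ' w + I * p w * ψ w))
      (p' z / (2 * p z) * (J z * (ψ' z + I * p z * ψ z))) S z := by
    refine ((hJ z hz).fun_mul ((hp z hz).add_I_mul_mul_of_schrodinger (hψ z hz) (hψ' z hz)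
      (hSch z hz))).congr_deriv ?_
    rw [hJeq z hz, hIR z hz, logDeriv_transport_identity hp0 (hden z hz), mul_assoc]
  exact (hJN.div_eq_zero_of_logDeriv_eq (hs z hz) (hs0 z hz) (hsq z hz)
    ((hU z hz).eq_two_mul_mul_of_sq_eq hz (hp z hz) (hs z hz) hsq)).congr_of_mem hA hz

theorem stmt_17 (S : Set ℝ) (hS : Convex ℝ S)
    (p p' s s' ψ ψ' ψ'' J J' : ℝ → ℂ)
    (hp : ∀ x ∈ S, HasDerivWithinAt p (p' x) S x) (hp0 : ∀ x ∈ S, p x ≠ 0)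
    (hs : ∀ x ∈ S, HasDerivWithinAt s (s' x) S x)
    (hsq : ∀ x ∈ S, (s x) ^ 2 = p x) (hs0 : ∀ x ∈ S, s x ≠ 0)
    (hψ : ∀ x ∈ S, HasDerivWithinAt ψ (ψ' x) S x)
    (hψ' : ∀ x ∈ S, HasDerivWithinAt ψ' (ψ'' x) S x)
    (hψ0 : ∀ x ∈ S, ψ x ≠ 0)
    (hSch : ∀ x ∈ S, ψ'' x = -(p x) ^ 2 * ψ x)
    (hden : ∀ x ∈ S, ψ' x + Complex.I * p x * ψ x ≠ 0)
    (IR : ℝ → ℂ)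
    (hIR : ∀ x ∈ S, IR x = -((ψ' x - Complex.I * p x * ψ x) /
      (ψ' x + Complex.I * p x * ψ x)))
    (hJ : ∀ x ∈ S, HasDerivWithinAt J (J' x) S x)
    (hJeq : ∀ x ∈ S, J' x = -Complex.I * p x * J x
      - (p' x / (2 * p x)) * J x * IR x)
    (A : ℝ → ℂ)
    (hA : ∀ x ∈ S, A x = J x * (ψ' x + Complex.I * p x * ψ x) / s x) :
    ∀ x ∈ S, ∀ y ∈ S, A x = A y :=
  stmt_17_general S hS p p' s s' ψ ψ' ψ'' J J' hp hs hsq hs0 hψ hψ' hSch hden IR hIR hJ hJeq A hA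
end
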